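/- Let N, S : ℝ → ℝ be differentiable real functions of η satisfying S(η)·S'(η)·N(η)² = 1 for all η, and define z(t, ξ, η) = S(η)·exp(i·(N(η)·t − N(η)²·ξ)). Then z satisfies z_ξ = i·z_tt and (i/2)·(z_ξ·conj(z_η) − conj(z_ξ)·z_η) = 1. -/

import Mathlib

/-- partial derivative in `t` -/
noncomputable def pt (f : ℝ → ℝ → ℝ → ℂ) : ℝ → ℝ → ℝ → ℂ :=
  fun t ξ η => deriv (fun s => f s ξ η) t

/-- partial derivative in `ξ` -/
noncomputable def px (f : ℝ → ℝ → ℝ → ℂ) : ℝ → ℝ → ℝ → ℂ :=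
  fun t ξ η => deriv (fun s => f t s η) ξ

/-- partial derivative in `η` -/
noncomputable def pe (f : ℝ → ℝ → ℝ → ℂ) : ℝ → ℝ → ℝ → ℂ :=
  fun t ξ η => deriv (fun s => f t ξ s) η

/-!
Every partial derivative of `z = S e^{iθ}`, `θ = N t - N² ξ`, has the form `(a + i S θ') e^{iθ}`
with real `a` and `θ'`. In `t` and `ξ` the amplitude is constant and the phase linear, so
`z_t = i N z`, `z_tt = -N² z = -i z_ξ`. For two such derivatives the expression
`(i/2)(p q̄ - p̄ q) = -Im (p q̄)` only sees the real coefficients, giving `S (a₁ θ₂' - θ₁' a₂)`;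
with `a₁ = 0`, `θ₁' = -N²`, `a₂ = S'` this is `S S' N² = 1`.
-/

open Complex ComplexConjugate

theorem hasDerivAt_mul_cexp_ofReal_mul_I {c : ℝ → ℂ} {θ : ℝ → ℝ} {c' : ℂ} {θ' x : ℝ}
    (hc : HasDerivAt c c' x) (hθ : HasDerivAt θ θ' x) :
    HasDerivAt (fun s => c s * exp (θ s * I)) ((c' + c x * θ' * I) * exp (θ x * I)) x :=
  (HasDerivAt.mul hc (HasDerivAt.mul_const hθ.ofReal_comp I).cexp).congr_deriv (by ring)

theorem deriv_const_mul_cexp_ofReal_mul_I {θ : ℝ → ℝ} {θ' x : ℝ} (c : ℂ)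
    (hθ : HasDerivAt θ θ' x) :
    deriv (fun s => c * exp (θ s * I)) x = c * θ' * I * exp (θ x * I) := by
  rw [(hasDerivAt_mul_cexp_ofReal_mul_I (hasDerivAt_const x c) hθ).deriv, zero_add]

theorem I_div_two_mul_sub_conj_mul_cexp_ofReal_mul_I (A a₁ θ₁ a₂ θ₂ φ : ℝ) :
    let p := (a₁ + A * θ₁ * I) * exp (φ * I)
    let q := (a₂ + A * θ₂ * I) * exp (φ * I)
    I / 2 * (p * conj q - conj p * q) = A * (a₁ * θ₂ - θ₁ * a₂) := by
  intro p q
  have hE : exp (φ * I) * conj (exp (φ * I)) = 1 := by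
    rw [← exp_conj, ← exp_add, map_mul, conj_ofReal, conj_I, mul_neg, add_neg_cancel, exp_zero]
  simp only [p, q, map_mul, map_add, conj_ofReal, conj_I]
  linear_combination (A * (a₁ * θ₂ - θ₁ * a₂) : ℂ) * hE
    - (A * (a₁ * θ₂ - θ₁ * a₂) * exp (φ * I) * conj (exp (φ * I)) : ℂ) * I_sq

theorem solution_system_B (N S : ℝ → ℝ)
    (hN : Differentiable ℝ N) (hS : Differentiable ℝ S)
    (hcon : ∀ η, S η * deriv S η * (N η) ^ 2 = 1) :
    let z : ℝ → ℝ → ℝ → ℂ := fun t ξ η =>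
      (S η : ℂ) * Complex.exp (Complex.I * ((N η : ℂ) * t - (N η : ℂ) ^ 2 * ξ))
    ∀ t ξ η,
      px z t ξ η = Complex.I * pt (pt z) t ξ η ∧
      (Complex.I / 2) * (px z t ξ η * starRingEnd ℂ (pe z t ξ η)
        - starRingEnd ℂ (px z t ξ η) * pe z t ξ η) = 1 := by
  intro z t ξ η
  have hz : z = fun t ξ η => (S η : ℂ) * exp ((N η * t - N η ^ 2 * ξ : ℝ) * I) := by
    funext t ξ η
    simp only [z]
    push_cast
    ring_nf
  have hθt (t ξ η : ℝ) : HasDerivAt (fun s => N η * s - N η ^ 2 * ξ) (N η) t := by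
    simpa using ((hasDerivAt_id t).const_mul (N η)).sub_const (N η ^ 2 * ξ)
  have hθξ : HasDerivAt (fun s => N η * t - N η ^ 2 * s) (-N η ^ 2) ξ := by
    simpa using ((hasDerivAt_id ξ).const_mul (N η ^ 2)).const_sub (N η * t)
  have hθη : HasDerivAt (fun s => N s * t - N s ^ 2 * ξ)
      (deriv N η * t - 2 * N η * deriv N η * ξ) η :=
    (HasDerivAt.sub ((hN η).hasDerivAt.mul_const t)
      (((hN η).hasDerivAt.pow 2).mul_const ξ)).congr_deriv (by ring)
  have hpt : pt z = fun t ξ η => (S η : ℂ) * N η * I * exp ((N η * t - N η ^ 2 * ξ : ℝ) * I) := by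
    funext t ξ η
    rw [hz]
    exact deriv_const_mul_cexp_ofReal_mul_I _ (hθt t ξ η)
  have hptt : pt (pt z) t ξ η =
      (S η : ℂ) * N η * I * N η * I * exp ((N η * t - N η ^ 2 * ξ : ℝ) * I) := by
    rw [hpt]
    exact deriv_const_mul_cexp_ofReal_mul_I _ (hθt t ξ η)
  have hpx : px z t ξ η =
      ((0 : ℝ) + S η * (-N η ^ 2 : ℝ) * I) * exp ((N η * t - N η ^ 2 * ξ : ℝ) * I) := by
    rw [hz, px, deriv_const_mul_cexp_ofReal_mul_I _ hθξ]
    push_cast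
    ring
  have hpe : pe z t ξ η = (deriv S η + S η * (deriv N η * t - 2 * N η * deriv N η * ξ : ℝ) * I)
      * exp ((N η * t - N η ^ 2 * ξ : ℝ) * I) := by
    rw [hz, pe]
    exact (hasDerivAt_mul_cexp_ofReal_mul_I (hS η).hasDerivAt.ofReal_comp hθη).deriv
  refine ⟨?_, ?_⟩
  · rw [hpx, hptt, ofReal_zero, ofReal_neg, ofReal_pow]
    linear_combination
      (-(S η : ℂ) * N η ^ 2 * exp ((N η * t - N η ^ 2 * ξ : ℝ) * I) * I) * I_sq
  · rw [hpx, hpe, I_div_two_mul_sub_conj_mul_cexp_ofReal_mul_I]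
    norm_cast
    linear_combination hcon η
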